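/- Let M be the (2d+1)×(2d+1) incidence matrix of φ as above, and h = (1,...,1,2^0,...,2^d). Then h·(3I - M)^{-1}·e_0 = 3^d/(3^d - 1). In particular the vector (3I-M)^{-1}e_0 equals (2/(3^(2d)-1))·(3^(2d-1), 3^(2d-2), ..., 3, 1, 1)^T. -/

import Mathlib

open Matrix

/-- The incidence matrix of the morphism φ. -/
def Mmat (d : ℕ) : Matrix (Fin (2 * d + 1)) (Fin (2 * d + 1)) ℝ :=
  Matrix.of fun i j =>
    if (i : ℕ) = 0 then 1
    else if (i : ℕ) = (j : ℕ) + 1 then 1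
    else if (i : ℕ) = 2 * d ∧ (j : ℕ) = 2 * d then 2
    else 0

/-- The first standard basis vector `e₀`. -/
def e₀ (d : ℕ) : Fin (2 * d + 1) → ℝ := Pi.single 0 1

/-!
Rows `1, …, 2d` of `(3I - M) x` are `3 xᵢ - xᵢ₋₁` (the last one is `x_{2d} - x_{2d-1}`), so
the vectors on which they all vanish form the line spanned by `w = (3^{2d-1}, …, 3, 1, 1)`,
while the first row sends `w` to `(3^{2d} - 1)/2 ≠ 0`. Hence `3I - M` is injective and
`(3I - M)⁻¹ e₀ = 2 w / (3^{2d} - 1)`; two geometric sums give `h ⬝ w = 3^d (3^d + 1)/2`.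
-/

lemma three_pow_sub_one_ne_zero {n : ℕ} (hn : n ≠ 0) : (3 : ℝ) ^ n - 1 ≠ 0 :=
  sub_ne_zero.mpr (one_lt_pow₀ (by norm_num) hn).ne'

lemma sum_range_three_pow_rev (n : ℕ) :
    ∑ k ∈ Finset.range n, (3 : ℝ) ^ (n - 1 - k) = (3 ^ n - 1) / 2 := by
  have := geom_sum₂_mul (1 : ℝ) 3 n
  simp only [one_pow, one_mul] at this
  linarith

lemma sum_range_two_pow_mul_three_pow (n : ℕ) :
    ∑ k ∈ Finset.range n, (2 : ℝ) ^ k * 3 ^ (n - 1 - k) = 3 ^ n - 2 ^ n := by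
  linarith [geom_sum₂_mul (2 : ℝ) 3 n]

lemma Mmat_mulVec_zero (d : ℕ) (x : Fin (2 * d + 1) → ℝ) :
    (Mmat d *ᵥ x) 0 = ∑ j, x j := by
  simp [mulVec, dotProduct, Mmat]

lemma Mmat_succ_apply (d : ℕ) (i : Fin (2 * d)) (j : Fin (2 * d + 1)) :
    Mmat d i.succ j = (if j = i.castSucc then 1 else 0) +
      (if i.succ = Fin.last _ ∧ j = Fin.last _ then 2 else 0) := by
  have := i.isLt
  simp only [Mmat, of_apply, Fin.val_succ, Fin.ext_iff, Fin.val_castSucc, Fin.val_last]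
  split_ifs <;> norm_num <;> omega

lemma Mmat_mulVec_succ (d : ℕ) (x : Fin (2 * d + 1) → ℝ) (i : Fin (2 * d)) :
    (Mmat d *ᵥ x) i.succ =
      x i.castSucc + if i.succ = Fin.last _ then 2 * x (Fin.last _) else 0 := by
  simp only [mulVec, dotProduct, Mmat_succ_apply, add_mul, Finset.sum_add_distrib, ite_mul,
    one_mul, zero_mul, Finset.sum_ite_eq', Finset.mem_univ, if_true]
  split_ifs <;> simp_all

lemma three_sub_Mmat_mulVec_zero (d : ℕ) (x : Fin (2 * d + 1) → ℝ) :
    ((3 - Mmat d) *ᵥ x) 0 = 3 * x 0 - ∑ j, x j := by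
  simp [sub_mulVec, Mmat_mulVec_zero]

lemma three_sub_Mmat_mulVec_succ (d : ℕ) (x : Fin (2 * d + 1) → ℝ) (i : Fin (2 * d)) :
    ((3 - Mmat d) *ᵥ x) i.succ =
      3 * x i.succ - x i.castSucc - if i.succ = Fin.last _ then 2 * x (Fin.last _) else 0 := by
  simp [sub_mulVec, Mmat_mulVec_succ]; ring

def geomVec (d : ℕ) : Fin (2 * d + 1) → ℝ :=
  fun i => if (i : ℕ) < 2 * d then 3 ^ (2 * d - 1 - (i : ℕ)) else 1

def hVec (d : ℕ) : Fin (2 * d + 1) → ℝ :=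
  fun i => if (i : ℕ) < d then 1 else 2 ^ ((i : ℕ) - d)

lemma geomVec_castSucc (d : ℕ) (i : Fin (2 * d)) :
    geomVec d i.castSucc = 3 ^ (2 * d - 1 - i) := by
  simp [geomVec]

@[simp]
lemma geomVec_last (d : ℕ) : geomVec d (Fin.last _) = 1 := by
  simp [geomVec]

lemma sum_geomVec (d : ℕ) : ∑ i, geomVec d i = (3 ^ (2 * d) + 1) / 2 := by
  rw [Fin.sum_univ_castSucc]
  simp only [geomVec_castSucc, geomVec_last]
  rw [Fin.sum_univ_eq_sum_range (fun k => (3 : ℝ) ^ (2 * d - 1 - k)), sum_range_three_pow_rev]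
  ring

lemma three_sub_Mmat_mulVec_geomVec (d : ℕ) (hd : 1 ≤ d) :
    (3 - Mmat d) *ᵥ geomVec d = ((3 ^ (2 * d) - 1) / 2 : ℝ) • e₀ d := by
  ext i
  induction i using Fin.cases with
  | zero =>
    have h3 : (3 : ℝ) * 3 ^ (2 * d - 1) = 3 ^ (2 * d) := by
      rw [← pow_succ']; congr 1; omega
    rw [three_sub_Mmat_mulVec_zero, sum_geomVec]
    simp [geomVec, e₀, show 0 < 2 * d by omega, h3]
    ring
  | succ i =>
    rw [three_sub_Mmat_mulVec_succ, geomVec_castSucc]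
    simp only [e₀, Pi.smul_apply, Pi.single_apply, Fin.succ_ne_zero, if_false, smul_zero]
    split_ifs with hi
    · have : (i : ℕ) = 2 * d - 1 := by simp [Fin.ext_iff] at hi; omega
      rw [hi, geomVec_last, this, Nat.sub_self]
      norm_num
    · have hlt : (i : ℕ) + 1 < 2 * d := by simp [Fin.ext_iff] at hi; omega
      simp only [geomVec, Fin.val_succ, hlt, if_true]
      rw [show 2 * d - 1 - i = (2 * d - 1 - (i + 1)) + 1 by omega, pow_succ]
      ring

lemma eq_zero_of_three_sub_Mmat_mulVec_succ_eq_zero (d : ℕ) (y : Fin (2 * d + 1) → ℝ)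
    (hrows : ∀ i : Fin (2 * d), ((3 - Mmat d) *ᵥ y) i.succ = 0) (hlast : y (Fin.last _) = 0) :
    y = 0 := by
  funext i
  induction i using Fin.reverseInduction with
  | last => exact hlast
  | cast i ih =>
    have := hrows i
    rw [three_sub_Mmat_mulVec_succ, ih, hlast] at this
    simpa using this

lemma eq_zero_of_three_sub_Mmat_mulVec_eq_zero (d : ℕ) (hd : 1 ≤ d)
    (x : Fin (2 * d + 1) → ℝ) (hx : (3 - Mmat d) *ᵥ x = 0) : x = 0 := by
  have hc : (3 ^ (2 * d) - 1) / 2 ≠ (0 : ℝ) :=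
    div_ne_zero (three_pow_sub_one_ne_zero (by omega)) two_ne_zero
  have hx_eq : x = x (Fin.last _) • geomVec d := by
    refine sub_eq_zero.mp (eq_zero_of_three_sub_Mmat_mulVec_succ_eq_zero d _ (fun i => ?_) ?_)
    · simp [mulVec_sub, mulVec_smul, three_sub_Mmat_mulVec_geomVec d hd, hx, e₀,
        Fin.succ_ne_zero]
    · simp
  have hlast : x (Fin.last _) * ((3 ^ (2 * d) - 1) / 2) = 0 := by
    have := congrFun (hx_eq ▸ hx) 0
    simpa only [mulVec_smul, three_sub_Mmat_mulVec_geomVec d hd, e₀, Pi.smul_apply,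
      Pi.single_eq_same, smul_eq_mul, mul_one, Pi.zero_apply] using this
  rw [hx_eq, (mul_eq_zero.mp hlast).resolve_right hc, zero_smul]

lemma isUnit_three_sub_Mmat (d : ℕ) (hd : 1 ≤ d) : IsUnit (3 - Mmat d) := by
  refine mulVec_injective_iff_isUnit.mp fun x y hxy => sub_eq_zero.mp ?_
  exact eq_zero_of_three_sub_Mmat_mulVec_eq_zero d hd _ (by rw [mulVec_sub, hxy, sub_self])

lemma three_sub_Mmat_inv_mulVec_e₀ (d : ℕ) (hd : 1 ≤ d) :
    (3 - Mmat d)⁻¹ *ᵥ e₀ d = (2 / (3 ^ (2 * d) - 1) : ℝ) • geomVec d := by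
  have : Invertible (3 - Mmat d) := (isUnit_three_sub_Mmat d hd).invertible
  have hc : (3 : ℝ) ^ (2 * d) - 1 ≠ 0 := three_pow_sub_one_ne_zero (by omega)
  refine inv_mulVec_eq_vec ?_
  rw [mulVec_smul, three_sub_Mmat_mulVec_geomVec d hd, smul_smul,
    show 2 / (3 ^ (2 * d) - 1) * ((3 ^ (2 * d) - 1) / 2) = (1 : ℝ) by field_simp, one_smul]

lemma hVec_dotProduct_geomVec (d : ℕ) : hVec d ⬝ᵥ geomVec d = 3 ^ d * (3 ^ d + 1) / 2 := by
  simp only [dotProduct, hVec, geomVec]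
  rw [Fin.sum_univ_eq_sum_range (fun k => (if k < d then (1 : ℝ) else 2 ^ (k - d)) *
    if k < 2 * d then 3 ^ (2 * d - 1 - k) else 1), two_mul, Finset.sum_range_succ,
    Finset.sum_range_add]
  have hlow : ∀ k ∈ Finset.range d, ((if k < d then (1 : ℝ) else 2 ^ (k - d)) *
      if k < d + d then 3 ^ (d + d - 1 - k) else 1) = 3 ^ d * 3 ^ (d - 1 - k) := by
    intro k hk
    rw [Finset.mem_range] at hk
    rw [if_pos hk, if_pos (by omega), one_mul, ← pow_add]
    congr 1; omega
  have hhigh : ∀ k ∈ Finset.range d, ((if d + k < d then (1 : ℝ) else 2 ^ (d + k - d)) *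
      if d + k < d + d then 3 ^ (d + d - 1 - (d + k)) else 1) = 2 ^ k * 3 ^ (d - 1 - k) := by
    intro k hk
    rw [Finset.mem_range] at hk
    rw [if_neg (by omega), if_pos (by omega)]
    congr 2 <;> omega
  rw [Finset.sum_congr rfl hlow, Finset.sum_congr rfl hhigh, ← Finset.mul_sum,
    sum_range_three_pow_rev, sum_range_two_pow_mul_three_pow, if_neg (by omega),
    if_neg (by omega), Nat.add_sub_cancel_left, mul_one]
  ring

theorem stmt_18 (d : ℕ) (hd : 1 ≤ d)
    (h : Fin (2 * d + 1) → ℝ)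
    (hh : ∀ i : Fin (2 * d + 1),
      h i = if (i : ℕ) < d then 1 else 2 ^ ((i : ℕ) - d)) :
    dotProduct h ((3 - Mmat d)⁻¹.mulVec (e₀ d)) = 3 ^ d / (3 ^ d - 1) ∧
    (3 - Mmat d)⁻¹.mulVec (e₀ d) = fun i : Fin (2 * d + 1) =>
      2 / (3 ^ (2 * d) - 1) *
        (if (i : ℕ) < 2 * d then 3 ^ (2 * d - 1 - (i : ℕ)) else 1) := by
  obtain rfl : h = hVec d := funext hh
  rw [three_sub_Mmat_inv_mulVec_e₀ d hd, dotProduct_smul, hVec_dotProduct_geomVec]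
  refine ⟨?_, rfl⟩
  have h3 : (3 : ℝ) ^ d - 1 ≠ 0 := three_pow_sub_one_ne_zero (by omega)
  rw [smul_eq_mul, show (3 : ℝ) ^ (2 * d) - 1 = (3 ^ d - 1) * (3 ^ d + 1) by ring]
  field_simp
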